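/- Assuming the 2-color result p(2) ≤ 12 (every finite planar point set has a 2-coloring such that every homothetic copy of a fixed triangle T containing at least 12 points contains both colors), every finite planar point set has, for each k ≥ 1, a 2^k-coloring such that every homothetic copy of T containing at least 12^(2k−1) points contains all 2^k colors. -/

import Mathlib

/-- A translate of the closed positive quadrant based at `(a, b)`. -/
def quadrant (a b : ℝ) : Set (ℝ × ℝ) := {p | a ≤ p.1 ∧ b ≤ p.2}

/-- The standard triangle with vertices (0,0), (1,0), (0,1). -/
def stdT : Set (ℝ × ℝ) := {p | 0 ≤ p.1 ∧ 0 ≤ p.2 ∧ p.1 + p.2 ≤ 1}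

/-- `S` is a homothetic copy (positive homothety plus translation) of `T`. -/
def IsHomCopy (T S : Set (ℝ × ℝ)) : Prop :=
  ∃ l : ℝ, 0 < l ∧ ∃ w : ℝ × ℝ, S = (fun v => l • v + w) '' T

/-- The coloring `φ` of `P` with `k` colors is polychromatic for homothetic
copies of `T` with threshold `m`: every homothetic copy of `T` containing at
least `m` points of `P` contains a point of each color. -/
def PolyColor (T : Set (ℝ × ℝ)) (P : Finset (ℝ × ℝ)) (m k : ℕ)
    (φ : ℝ × ℝ → Fin k) : Prop :=
  ∀ S : Set (ℝ × ℝ), IsHomCopy T S → m ≤ ((P : Set (ℝ × ℝ)) ∩ S).ncard →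
    ∀ i : Fin k, ∃ p ∈ P, p ∈ S ∧ φ p = i

/-!
A `k`-coloring that is polychromatic for homothets of `T` with threshold `n ≥ 2` is
automatically balanced: a homothet with `2nm` points has `m` points of every color. If a
homothet `S` had fewer than `m` points of color `i`, sweep them by increasing `x + y`; each
one retires the corners of the current staircase lying below it (their triangles are capped
just under it) and opens at most two new corners. So the other points of `S` are covered by
at most `2m - 1` homothets avoiding color `i`, and one of them contains `n` points.

Refining the given 2-coloring by colorings of its two classes then gives
`p(2^(k+1)) ≤ 24 · p(2^k) ≤ 144 · p(2^k)`.
-/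

namespace Finset

variable {α : Type*} [LinearOrder α]

theorem exists_gt_le_of_gt [NoMaxOrder α] (s : Finset α) (x : α) :
    ∃ y, x < y ∧ ∀ r ∈ s, x < r → y ≤ r := by
  rcases (s.filter (x < ·)).eq_empty_or_nonempty with h | h
  · obtain ⟨y, hy⟩ := exists_gt x
    exact ⟨y, hy, fun r hr hxr => absurd (mem_filter.2 ⟨hr, hxr⟩) (h ▸ notMem_empty r)⟩
  · exact ⟨_, (mem_filter.1 (min'_mem _ h)).2,
      fun r hr hxr => min'_le _ r (mem_filter.2 ⟨hr, hxr⟩)⟩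

theorem exists_lt_ge_of_lt [NoMinOrder α] (s : Finset α) (x : α) :
    ∃ y, y < x ∧ ∀ r ∈ s, r < x → r ≤ y :=
  exists_gt_le_of_gt (α := αᵒᵈ) s x

end Finset

theorem Finset.coe_filter_mem_eq_inter {α : Type*} (P : Finset α) (S : Set α)
    [DecidablePred (· ∈ S)] : (↑(P.filter (· ∈ S)) : Set α) = ↑P ∩ S := by
  rw [Finset.coe_filter]
  rfl

theorem Set.ncard_coe_finset_inter {α : Type*} (P : Finset α) (S : Set α)
    [DecidablePred (· ∈ S)] : ((P : Set α) ∩ S).ncard = (P.filter (· ∈ S)).card := by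
  rw [← Finset.coe_filter_mem_eq_inter, Set.ncard_coe_finset]

def tri (c : ℝ × ℝ) (t : ℝ) : Set (ℝ × ℝ) := {p | c ≤ p ∧ p.1 + p.2 ≤ t}

theorem image_stdT {l : ℝ} (hl : 0 < l) (w : ℝ × ℝ) :
    (fun v => l • v + w) '' stdT = tri w (w.1 + w.2 + l) := by
  ext p
  simp only [Set.mem_image, stdT, tri, Set.mem_ofPred_eq, Prod.le_def]
  constructor
  · rintro ⟨v, ⟨h1, h2, h3⟩, rfl⟩
    simp only [Prod.fst_add, Prod.snd_add, Prod.smul_fst, Prod.smul_snd, smul_eq_mul]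
    exact ⟨⟨by nlinarith, by nlinarith⟩, by nlinarith⟩
  · rintro ⟨⟨h1, h2⟩, h3⟩
    refine ⟨((p.1 - w.1) / l, (p.2 - w.2) / l), ⟨by positivity, by positivity, ?_⟩, ?_⟩
    · rw [← add_div, div_le_one hl]; linarith
    · ext <;> simp [smul_eq_mul, mul_div_cancel₀ _ hl.ne']

theorem isHomCopy_stdT_iff {S : Set (ℝ × ℝ)} :
    IsHomCopy stdT S ↔ ∃ c t, c.1 + c.2 < t ∧ S = tri c t := by
  constructor
  · rintro ⟨l, hl, w, rfl⟩
    exact ⟨w, w.1 + w.2 + l, by linarith, image_stdT hl w⟩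
  · rintro ⟨c, t, h, rfl⟩
    refine ⟨t - c.1 - c.2, by linarith, c, ?_⟩
    rw [image_stdT (by linarith)]
    ring_nf

theorem tri_inter_tri (c c' : ℝ × ℝ) (t t' : ℝ) :
    tri c t ∩ tri c' t' = tri (c ⊔ c') (min t t') := by
  ext p
  simp only [tri, Set.mem_inter_iff, Set.mem_ofPred_eq, sup_le_iff, le_min_iff]
  tauto

theorem Prod.eq_of_le_of_add_le {α : Type*} [AddCommMonoid α] [LinearOrder α]
    [IsOrderedCancelAddMonoid α] {p q : α × α} (h : p ≤ q) (hs : q.1 + q.2 ≤ p.1 + p.2) :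
    p = q :=
  le_antisymm h ⟨le_of_not_gt fun h1 => (add_lt_add_of_lt_of_le h1 h.2).not_ge hs,
    le_of_not_gt fun h2 => (add_lt_add_of_le_of_lt h.1 h2).not_ge hs⟩

theorem tri_subset_singleton {c : ℝ × ℝ} {t : ℝ} (h : t ≤ c.1 + c.2) : tri c t ⊆ {c} :=
  fun _ hp => (Prod.eq_of_le_of_add_le hp.1 (hp.2.trans h)).symm

theorem Prod.not_le_iff {α β : Type*} [LinearOrder α] [LinearOrder β] {p q : α × β} :
    ¬p ≤ q ↔ q.1 < p.1 ∨ q.2 < p.2 := by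
  simp only [Prod.le_def, not_and_or, not_le]

theorem exists_two_corners_cover_not_le (Q K : Finset (ℝ × ℝ)) (a : ℝ × ℝ)
    (hK : ∀ c ∈ K, c ≤ a) :
    ∃ E : Finset (ℝ × ℝ), E.card ≤ 2 ∧ (∀ e ∈ E, (∃ c ∈ K, c ≤ e) ∧ ¬e ≤ a) ∧
      ∀ q ∈ Q, (∃ c ∈ K, c ≤ q) → ¬q ≤ a → ∃ e ∈ E, e ≤ q := by
  rcases K.eq_empty_or_nonempty with rfl | hne
  · exact ⟨∅, by simp, by simp, by simp⟩
  obtain ⟨cx, hcx, hcx_min⟩ := K.exists_min_image Prod.fst hne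
  obtain ⟨cy, hcy, hcy_min⟩ := K.exists_min_image Prod.snd hne
  obtain ⟨x, hax, hx⟩ := (Q.image Prod.fst).exists_gt_le_of_gt a.1
  obtain ⟨y, hay, hy⟩ := (Q.image Prod.snd).exists_gt_le_of_gt a.2
  refine ⟨{(x, cy.2), (cx.1, y)}, Finset.card_le_two, ?_, ?_⟩
  · simp only [Finset.mem_insert, Finset.mem_singleton, forall_eq_or_imp, forall_eq,
      Prod.not_le_iff]
    exact ⟨⟨⟨cy, hcy, (hK cy hcy).1.trans hax.le, le_rfl⟩, Or.inl hax⟩,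
      ⟨cx, hcx, le_rfl, (hK cx hcx).2.trans hay.le⟩, Or.inr hay⟩
  · rintro q hq ⟨c, hc, hcq⟩ hqa
    rcases Prod.not_le_iff.1 hqa with h | h
    · exact ⟨(x, cy.2), by simp,
        hx _ (Finset.mem_image_of_mem _ hq) h, (hcy_min c hc).trans hcq.2⟩
    · exact ⟨(cx.1, y), by simp,
        (hcx_min c hc).trans hcq.1, hy _ (Finset.mem_image_of_mem _ hq) h⟩

structure IsTriCover (Q Z C : Finset (ℝ × ℝ)) (D : Finset ((ℝ × ℝ) × ℝ)) : Prop where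
  exists_le : ∀ d ∈ D, ∃ c ∈ C, c ≤ d.1
  notMem : ∀ d ∈ D, ∀ z ∈ Z, z ∉ tri d.1 d.2
  cover : ∀ q ∈ Q, q ∉ Z → (∃ c ∈ C, c ≤ q) → ∃ d ∈ D, q ∈ tri d.1 d.2

theorem isTriCover_empty {Q C : Finset (ℝ × ℝ)} {t : ℝ} (ht : ∀ q ∈ Q, q.1 + q.2 ≤ t) :
    IsTriCover Q ∅ C (C.image (·, t)) where
  exists_le := Finset.forall_mem_image.2 fun c hc => ⟨c, hc, le_rfl⟩
  notMem := by simp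
  cover := fun q hq _ ⟨c, hc, hcq⟩ => ⟨(c, t), Finset.mem_image_of_mem _ hc, hcq, ht q hq⟩

theorem IsTriCover.insert_of_forall_le {Q Z C E : Finset (ℝ × ℝ)}
    {D : Finset ((ℝ × ℝ) × ℝ)} {a : ℝ × ℝ} {t : ℝ} (hD : IsTriCover Q Z (C.filter (¬· ≤ a) ∪ E) D)
    (hmin : ∀ z ∈ Z, a.1 + a.2 ≤ z.1 + z.2)
    (hEC : ∀ e ∈ E, (∃ c ∈ C.filter (· ≤ a), c ≤ e) ∧ ¬e ≤ a)
    (hEQ : ∀ q ∈ Q, (∃ c ∈ C.filter (· ≤ a), c ≤ q) → ¬q ≤ a → ∃ e ∈ E, e ≤ q)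
    (hta : t < a.1 + a.2) (ht : ∀ q ∈ Q, q.1 + q.2 < a.1 + a.2 → q.1 + q.2 ≤ t) :
    IsTriCover Q (insert a Z) C ((C.filter (· ≤ a)).image (·, t) ∪ D) where
  exists_le := by
    simp only [Finset.mem_union, Finset.mem_image]
    rintro d (⟨c, hc, rfl⟩ | hd)
    · exact ⟨c, (Finset.mem_filter.1 hc).1, le_rfl⟩
    obtain ⟨c', hc', hc'd⟩ := hD.exists_le d hd
    rcases Finset.mem_union.1 hc' with hc' | hc'
    · exact ⟨c', (Finset.mem_filter.1 hc').1, hc'd⟩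
    · obtain ⟨c, hc, hcc'⟩ := (hEC c' hc').1
      exact ⟨c, (Finset.mem_filter.1 hc).1, hcc'.trans hc'd⟩
  notMem := by
    simp only [Finset.mem_union, Finset.mem_image, Finset.mem_insert]
    rintro d (⟨c, hc, rfl⟩ | hd) z hz hzd
    · have : a.1 + a.2 ≤ z.1 + z.2 := by rcases hz with rfl | hz; exacts [le_rfl, hmin z hz]
      exact (hzd.2.trans_lt hta).not_ge this
    rcases hz with rfl | hz
    · obtain ⟨c', hc', hc'd⟩ := hD.exists_le d hd
      have hc'z : ¬c' ≤ z := by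
        rcases Finset.mem_union.1 hc' with hc' | hc'
        exacts [(Finset.mem_filter.1 hc').2, (hEC c' hc').2]
      exact hc'z (hc'd.trans hzd.1)
    · exact hD.notMem d hd z hz hzd
  cover := by
    rintro q hq hqZ ⟨c, hc, hcq⟩
    rw [Finset.mem_insert, not_or] at hqZ
    have hD' : ∀ c' ∈ C.filter (¬· ≤ a) ∪ E, c' ≤ q →
        ∃ d ∈ (C.filter (· ≤ a)).image (·, t) ∪ D, q ∈ tri d.1 d.2 := fun c' hc' hc'q =>
      let ⟨d, hd, hqd⟩ := hD.cover q hq hqZ.2 ⟨c', hc', hc'q⟩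
      ⟨d, Finset.mem_union_right _ hd, hqd⟩
    by_cases hca : c ≤ a
    · have hcK : c ∈ C.filter (· ≤ a) := Finset.mem_filter.2 ⟨hc, hca⟩
      by_cases hqa : q.1 + q.2 < a.1 + a.2
      · exact ⟨(c, t), Finset.mem_union_left _ (Finset.mem_image_of_mem _ hcK),
          hcq, ht q hq hqa⟩
      · have hnle : ¬q ≤ a := fun h => hqZ.1 (Prod.eq_of_le_of_add_le h (not_lt.1 hqa))
        obtain ⟨e, he, heq⟩ := hEQ q hq ⟨c, hcK, hcq⟩ hnle
        exact hD' e (Finset.mem_union_right _ he) heq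
    · exact hD' c (Finset.mem_union_left _ (Finset.mem_filter.2 ⟨hc, hca⟩)) hcq

theorem exists_isTriCover (Q Z C : Finset (ℝ × ℝ)) :
    ∃ D, D.card ≤ C.card + 2 * Z.card ∧ IsTriCover Q Z C D := by
  induction Z using Finset.induction_on_min_value (fun z : ℝ × ℝ => z.1 + z.2)
    generalizing C with
  | empty =>
    obtain ⟨t, ht⟩ := (Q.image fun q => q.1 + q.2).exists_le
    exact ⟨_, Finset.card_image_le.trans (by simp),
      isTriCover_empty (Finset.forall_mem_image.1 ht)⟩
  | insert a Z ha hmin ih =>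
    obtain ⟨E, hEcard, hEC, hEQ⟩ :=
      exists_two_corners_cover_not_le Q (C.filter (· ≤ a)) a fun _ hc =>
        (Finset.mem_filter.1 hc).2
    obtain ⟨t, hta, ht⟩ := (Q.image fun q => q.1 + q.2).exists_lt_ge_of_lt (a.1 + a.2)
    obtain ⟨D, hDcard, hD⟩ := ih (C.filter (¬· ≤ a) ∪ E)
    refine ⟨_, ?_, hD.insert_of_forall_le hmin hEC hEQ hta (Finset.forall_mem_image.1 ht)⟩
    have := Finset.card_union_le ((C.filter (· ≤ a)).image (·, t)) D
    have := Finset.card_union_le (C.filter (¬· ≤ a)) E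
    have := Finset.card_filter_add_card_filter_not (s := C) (· ≤ a)
    have := Finset.card_image_le (s := C.filter (· ≤ a)) (f := (·, t))
    have := Finset.card_insert_of_notMem ha
    omega

theorem isHomCopy_tri_of_one_lt_ncard {A : Set (ℝ × ℝ)} {c : ℝ × ℝ} {t : ℝ}
    (h : 1 < (A ∩ tri c t).ncard) : IsHomCopy stdT (tri c t) := by
  refine isHomCopy_stdT_iff.2 ⟨c, t, lt_of_not_ge fun hct => h.not_ge ?_, rfl⟩
  calc (A ∩ tri c t).ncard ≤ ({c} : Set (ℝ × ℝ)).ncard :=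
        Set.ncard_le_ncard (Set.inter_subset_right.trans (tri_subset_singleton hct))
    _ = 1 := Set.ncard_singleton c

theorem PolyColor.le_ncard_inter_of_mul_le {n k m : ℕ} {P : Finset (ℝ × ℝ)}
    {φ : ℝ × ℝ → Fin k} (hφ : PolyColor stdT P n k φ) (hn : 2 ≤ n) {S : Set (ℝ × ℝ)}
    (hS : IsHomCopy stdT S) (hm : 2 * n * m ≤ ((P : Set (ℝ × ℝ)) ∩ S).ncard) (i : Fin k) :
    m ≤ ((↑(P.filter (φ · = i)) : Set (ℝ × ℝ)) ∩ S).ncard := by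
  classical
  obtain ⟨c, t, -, rfl⟩ := isHomCopy_stdT_iff.1 hS
  rw [Set.ncard_coe_finset_inter] at hm ⊢
  rw [Finset.filter_comm]
  set T := P.filter (· ∈ tri c t)
  set Z := T.filter (φ · = i)
  by_contra! hZ
  obtain ⟨D, hDcard, hD⟩ := exists_isTriCover T Z {c}
  obtain ⟨d, hd, hnd⟩ : ∃ d ∈ D, n ≤ (T.filter (· ∈ tri d.1 d.2)).card := by
    by_contra! hsmall
    have hcover : T \ Z ⊆ D.biUnion fun d => T.filter (· ∈ tri d.1 d.2) := by
      intro q hq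
      rw [Finset.mem_sdiff] at hq
      obtain ⟨d, hd, hqd⟩ := hD.cover q hq.1 hq.2
        ⟨c, Finset.mem_singleton_self c, (Finset.mem_filter.1 hq.1).2.1⟩
      exact Finset.mem_biUnion.2 ⟨d, hd, Finset.mem_filter.2 ⟨hq.1, hqd⟩⟩
    have := (Finset.card_le_card hcover).trans <|
      Finset.card_biUnion_le_card_mul _ _ (n - 1) fun d hd => Nat.le_sub_one_of_lt (hsmall d hd)
    rw [Finset.card_sdiff_of_subset (Finset.filter_subset _ _), Nat.sub_le_iff_le_add'] at this
    rw [Finset.card_singleton] at hDcard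
    obtain ⟨n, rfl⟩ : ∃ n', n = n' + 1 := ⟨n - 1, by omega⟩
    rw [Nat.add_sub_cancel] at this
    nlinarith [Nat.mul_le_mul_right n hDcard, Nat.mul_le_mul_left (2 * (n + 1)) hZ]
  have hTd : n ≤ ((P : Set (ℝ × ℝ)) ∩ (tri c t ∩ tri d.1 d.2)).ncard := by
    rwa [← Set.inter_assoc, ← Finset.coe_filter_mem_eq_inter, Set.ncard_coe_finset_inter]
  rw [tri_inter_tri] at hTd
  obtain ⟨p, hp, hpS, hpi⟩ := hφ _ (isHomCopy_tri_of_one_lt_ncard (A := P) (by omega)) hTd i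
  rw [← tri_inter_tri] at hpS
  exact hD.notMem d hd p (Finset.mem_filter.2 ⟨Finset.mem_filter.2 ⟨hp, hpS.1⟩, hpi⟩) hpS.2

theorem PolyColor.finProd {T : Set (ℝ × ℝ)} {P : Finset (ℝ × ℝ)} {M m a b : ℕ}
    {φ : ℝ × ℝ → Fin a}
    (hφ : ∀ S, IsHomCopy T S → M ≤ ((P : Set (ℝ × ℝ)) ∩ S).ncard →
      ∀ j, m ≤ ((↑(P.filter (φ · = j)) : Set (ℝ × ℝ)) ∩ S).ncard)
    {ψ : Fin a → ℝ × ℝ → Fin b} (hψ : ∀ j, PolyColor T (P.filter (φ · = j)) m b (ψ j)) :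
    PolyColor T P M (b * a) fun p => finProdFinEquiv (ψ (φ p) p, φ p) := by
  intro S hS hM x
  obtain ⟨⟨u, j⟩, rfl⟩ := finProdFinEquiv.surjective x
  obtain ⟨p, hp, hpS, rfl⟩ := hψ j S hS (hφ S hS hM j) u
  obtain ⟨hpP, rfl⟩ := Finset.mem_filter.1 hp
  exact ⟨p, hpP, hpS, rfl⟩

theorem stmt_11
    (h12 : ∀ P : Finset (ℝ × ℝ), ∃ φ : ℝ × ℝ → Fin 2, PolyColor stdT P 12 2 φ) :
    ∀ k : ℕ, 1 ≤ k → ∀ P : Finset (ℝ × ℝ),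
      ∃ ψ : ℝ × ℝ → Fin (2 ^ k), PolyColor stdT P (12 ^ (2 * k - 1)) (2 ^ k) ψ := by
  intro k hk
  induction k, hk using Nat.le_induction with
  | base => simpa using h12
  | succ k _ ih =>
    intro P
    obtain ⟨φ, hφ⟩ := h12 P
    choose ψ hψ using fun j : Fin 2 => ih (P.filter (φ · = j))
    have hM : 12 ^ (2 * (k + 1) - 1) = 144 * 12 ^ (2 * k - 1) := by
      rw [show 2 * (k + 1) - 1 = 2 * k - 1 + 2 by omega, pow_add]
      ring
    rw [pow_succ, hM]
    refine ⟨_, PolyColor.finProd (fun S hS hSM j => ?_) hψ⟩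
    exact hφ.le_ncard_inter_of_mul_le (by norm_num) hS (le_trans (by omega) hSM) j
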